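/- Let F be a CNF formula over variables X that is symmetric with respect to every permutation in a group G of permutations of X, and let P be a nonempty set of points falsifying F that is stable modulo symmetry G with respect to F and a transport function g : P → F. Then the union of the G-orbits of the points of P, namely Q = { π(p) : π ∈ G, p ∈ P }, is a stable set of points with respect to F and some transport function g' (which on a point π(p) can be taken to be the clause π(g(p))). -/

import Mathlib

/-!
Permutations act compatibly on points, clauses, satisfaction and 1-neighborhoods, so a
neighbour of `π p` across `π (g p)` is `π q` for a neighbour `q` of `p` across `g p`. Stability
modulo `G` puts `q` in `P` or writes it as `σ p''` with `σ ∈ G`, `p'' ∈ P`; then `π q = (π σ) p''`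
lies in the orbit of `P` again. Choosing for each orbit point `π p` the clause `π (g p)` therefore
gives a transport function for which the orbit set is stable.
-/

/-- A point `p` satisfies a clause `C` (a finite set of literals) if it
satisfies some literal of `C`. -/
def satClause {X : Type*} (p : X → Bool) (C : Finset (X × Bool)) : Prop :=
  ∃ l ∈ C, p l.1 = l.2

/-- The 1-neighborhood of a point `p` with respect to a clause `C`: points
differing from `p` in exactly one variable that satisfy `C`. -/
def Nbhd {X : Type*} (p : X → Bool) (C : Finset (X × Bool)) : Set (X → Bool) :=
  {q | (∃! x, q x ≠ p x) ∧ satClause q C}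

/-- The action of a permutation `π` of the variables on a point:
`π(p) = p ∘ π⁻¹`. -/
def permPoint {X : Type*} (π : Equiv.Perm X) (p : X → Bool) : X → Bool :=
  fun x => p (π.symm x)

/-- The action of a permutation `π` of the variables on a clause. -/
def permClause {X : Type*} [DecidableEq X] (π : Equiv.Perm X)
    (C : Finset (X × Bool)) : Finset (X × Bool) :=
  C.image fun l => (π l.1, l.2)

section Symmetry

variable {X : Type*}

lemma permPoint_mul (π σ : Equiv.Perm X) (p : X → Bool) :
    permPoint π (permPoint σ p) = permPoint (π * σ) p :=
  rfl

lemma permPoint_inv_cancel (π : Equiv.Perm X) (p : X → Bool) :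
    permPoint π (permPoint π⁻¹ p) = p := by
  rw [permPoint_mul, mul_inv_cancel]
  rfl

variable [DecidableEq X]

lemma satClause_permPoint_permClause (π : Equiv.Perm X) (p : X → Bool)
    (C : Finset (X × Bool)) :
    satClause (permPoint π p) (permClause π C) ↔ satClause p C := by
  simp only [satClause, permClause, Finset.exists_mem_image, permPoint, Equiv.symm_apply_apply]

lemma mem_Nbhd_permPoint_permClause (π : Equiv.Perm X) (p q : X → Bool)
    (C : Finset (X × Bool)) :
    permPoint π q ∈ Nbhd (permPoint π p) (permClause π C) ↔ q ∈ Nbhd p C := by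
  have hdiff : (∃! x, permPoint π q x ≠ permPoint π p x) ↔ ∃! x, q x ≠ p x :=
    (π.existsUnique_congr_left (p := fun x => q x ≠ p x)).symm
  exact and_congr hdiff (satClause_permPoint_permClause π q C)

lemma permClause_mem_of_symmetric {F : Finset (Finset (X × Bool))} {π : Equiv.Perm X}
    (hsym : F.image (permClause π) = F) {C : Finset (X × Bool)} (hC : C ∈ F) :
    permClause π C ∈ F :=
  hsym ▸ Finset.mem_image_of_mem _ hC

def orbitSet (G : Subgroup (Equiv.Perm X)) (P : Set (X → Bool)) : Set (X → Bool) :=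
  {q | ∃ π ∈ G, ∃ p ∈ P, q = permPoint π p}

variable {F : Finset (Finset (X × Bool))} {G : Subgroup (Equiv.Perm X)} {P : Set (X → Bool)}
  {g : (X → Bool) → Finset (X × Bool)} {π : Equiv.Perm X} {p q : X → Bool}

lemma permClause_mem_and_not_satClause (hsym : F.image (permClause π) = F)
    {C : Finset (X × Bool)} (hC : C ∈ F ∧ ¬ satClause p C) (hq : q = permPoint π p) :
    permClause π C ∈ F ∧ ¬ satClause q (permClause π C) := by
  subst hq
  exact ⟨permClause_mem_of_symmetric hsym hC.1,
    (satClause_permPoint_permClause π p C).not.mpr hC.2⟩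

lemma Nbhd_permClause_subset_orbitSet
    (hstab : ∀ p ∈ P, ∀ p' ∈ Nbhd p (g p), p' ∈ P ∨ ∃ π ∈ G, ∃ p'' ∈ P, p' = permPoint π p'')
    (hπ : π ∈ G) (hp : p ∈ P) (hq : q = permPoint π p) :
    Nbhd q (permClause π (g p)) ⊆ orbitSet G P := by
  subst hq
  intro q' hq'
  rw [← permPoint_inv_cancel π q', mem_Nbhd_permPoint_permClause] at hq'
  rcases hstab p hp _ hq' with hP | ⟨σ, hσ, p'', hp'', hσp''⟩
  · exact ⟨π, hπ, _, hP, (permPoint_inv_cancel π q').symm⟩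
  · refine ⟨π * σ, mul_mem hπ hσ, p'', hp'', ?_⟩
    rw [← permPoint_mul, ← hσp'', permPoint_inv_cancel]

end Symmetry

theorem stmt_7_general {X : Type*} [DecidableEq X]
    (F : Finset (Finset (X × Bool)))
    (G : Subgroup (Equiv.Perm X))
    -- `F` is symmetric with respect to every permutation of `G`
    (hsym : ∀ π ∈ G, F.image (permClause π) = F)
    (P : Set (X → Bool))
    (g : (X → Bool) → Finset (X × Bool))
    -- `g` is a transport function on `P`
    (hg : ∀ p ∈ P, g p ∈ F ∧ ¬ satClause p (g p))
    -- `P` is stable modulo symmetry `G` with respect to `F` and `g`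
    (hstab : ∀ p ∈ P, ∀ p' ∈ Nbhd p (g p),
        p' ∈ P ∨ ∃ π ∈ G, ∃ p'' ∈ P, p' = permPoint π p'') :
    -- the union `Q` of the `G`-orbits of the points of `P` is a stable set of
    -- points with respect to `F` and some transport function `g'`
    ∃ g' : (X → Bool) → Finset (X × Bool),
      (∀ q ∈ {q | ∃ π ∈ G, ∃ p ∈ P, q = permPoint π p},
          g' q ∈ F ∧ ¬ satClause q (g' q)) ∧
      (∀ q ∈ {q | ∃ π ∈ G, ∃ p ∈ P, q = permPoint π p},
          Nbhd q (g' q) ⊆ {q | ∃ π ∈ G, ∃ p ∈ P, q = permPoint π p}) := by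
  choose! π hπ p hp hq using fun q (hq : q ∈ orbitSet G P) => hq
  exact ⟨fun q => permClause (π q) (g (p q)),
    fun q hQ => permClause_mem_and_not_satClause (hsym _ (hπ q hQ)) (hg _ (hp q hQ)) (hq q hQ),
    fun q hQ => Nbhd_permClause_subset_orbitSet hstab (hπ q hQ) (hp q hQ) (hq q hQ)⟩

theorem stmt_7 {X : Type*} [Fintype X] [DecidableEq X]
    (F : Finset (Finset (X × Bool)))
    (hF : ∀ C ∈ F, ∀ l₁ ∈ C, ∀ l₂ ∈ C, (l₁ : X × Bool).1 = (l₂ : X × Bool).1 → l₁ = l₂)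
    (G : Subgroup (Equiv.Perm X))
    -- `F` is symmetric with respect to every permutation of `G`
    (hsym : ∀ π ∈ G, F.image (permClause π) = F)
    (P : Set (X → Bool)) (hP : P.Nonempty)
    (g : (X → Bool) → Finset (X × Bool))
    -- `g` is a transport function on `P`
    (hg : ∀ p ∈ P, g p ∈ F ∧ ¬ satClause p (g p))
    -- `P` is stable modulo symmetry `G` with respect to `F` and `g`
    (hstab : ∀ p ∈ P, ∀ p' ∈ Nbhd p (g p),
        p' ∈ P ∨ ∃ π ∈ G, ∃ p'' ∈ P, p' = permPoint π p'') :
    -- the union `Q` of the `G`-orbits of the points of `P` is a stable set of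
    -- points with respect to `F` and some transport function `g'`
    ∃ g' : (X → Bool) → Finset (X × Bool),
      (∀ q ∈ {q | ∃ π ∈ G, ∃ p ∈ P, q = permPoint π p},
          g' q ∈ F ∧ ¬ satClause q (g' q)) ∧
      (∀ q ∈ {q | ∃ π ∈ G, ∃ p ∈ P, q = permPoint π p},
          Nbhd q (g' q) ⊆ {q | ∃ π ∈ G, ∃ p ∈ P, q = permPoint π p}) :=
  stmt_7_general F G hsym P g hg hstab
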